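/- arXiv:2203.11972 — 2 statements merged into one kernel-verified Lean document; each statement's English description precedes it below -/
import Mathlib

section
/- Let F be a self-map on S ⊂ ℝ^n such that |Fx − Fy| ≤ A|x − y| (entrywise, where |·| is the entrywise absolute value) for some matrix A ≥ 0 with r(A) < 1. Then F is eventually contracting on S with respect to the Euclidean norm: there exist k ∈ ℕ and λ < 1 such that ‖F^k x − F^k y‖ ≤ λ‖x − y‖ for all x, y ∈ S. Consequently, if S is closed and F maps S into itself, F has a unique fixed point in S and iterates from any starting point converge to it. -/
/-!
By Gelfand's formula, `r(A) < 1` forces `A ^ k → 0`, so some power `A ^ k` has ∞-operator norm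
below `min 1 (1 / √n)`. Iterating the entrywise bound (monotone because `A ≥ 0`) gives
`|F^k x - F^k y| ≤ A^k |x - y|`, so `F^k` contracts both the sup metric and, after losing the
factor `√n` between the two norms, the Euclidean one. Banach's theorem applied to `F^k` on the
complete set `S` yields the fixed point; the iterates of `F` converge to it because each of
the `k` subsequences `m ↦ F^(k m + r) x` does.
-/

open Filter Topology

/-- The spectral radius of a real square matrix: the maximum modulus of its
(possibly complex) eigenvalues. -/
noncomputable def specRad {n : ℕ} (A : Matrix (Fin n) (Fin n) ℝ) : ℝ :=
  sSup {r : ℝ | ∃ μ : ℂ,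
    (∃ v : Fin n → ℂ, v ≠ 0 ∧ (A.map Complex.ofReal).mulVec v = μ • v) ∧
    r = ‖μ‖}

open Set Function
open scoped NNReal ENNReal Matrix

theorem spectrum.tendsto_pow_atTop_nhds_zero_of_spectralRadius_lt_one {A : Type*} [NormedRing A]
    [NormedAlgebra ℂ A] [CompleteSpace A] {a : A} (ha : spectralRadius ℂ a < 1) :
    Tendsto (a ^ ·) atTop (𝓝 0) := by
  obtain ⟨c, hρc, hc1⟩ := exists_between ha
  have hc : c ≠ ⊤ := hc1.ne_top
  have hroot : ∀ᶠ m : ℕ in atTop, ‖a ^ m‖ ^ (1 / m : ℝ) < c.toReal := by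
    filter_upwards [(pow_norm_pow_one_div_tendsto_nhds_spectralRadius a).eventually_lt_const hρc]
      with m hm
    rwa [← ENNReal.ofReal_lt_iff_lt_toReal (by positivity) hc]
  have hbound : ∀ᶠ m : ℕ in atTop, ‖a ^ m‖ ≤ c.toReal ^ m := by
    filter_upwards [hroot, eventually_gt_atTop 0] with m hm hm0
    rw [one_div, Real.rpow_inv_lt_iff_of_pos (norm_nonneg _) ENNReal.toReal_nonneg
      (by positivity), Real.rpow_natCast] at hm
    exact hm.le
  exact squeeze_zero_norm' hbound (tendsto_pow_atTop_nhds_zero_of_lt_one ENNReal.toReal_nonneg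
    (ENNReal.toReal_lt_of_lt_ofReal (by simpa using hc1)))

theorem Matrix.mem_spectrum_iff_exists_mulVec_eq_smul {n K : Type*} [Fintype n] [DecidableEq n]
    [Field K] (M : Matrix n n K) (μ : K) :
    μ ∈ spectrum K M ↔ ∃ v ≠ 0, M *ᵥ v = μ • v := by
  rw [← spectrum_toLin', ← Module.End.hasEigenvalue_iff_mem_spectrum,
    Module.End.hasEigenvalue_iff, Submodule.ne_bot_iff]
  simp only [Module.End.mem_eigenspace_iff, toLin'_apply]
  exact exists_congr fun v => and_comm

theorem specRad_eq_sSup_norm_spectrum {n : ℕ} (A : Matrix (Fin n) (Fin n) ℝ) :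
    specRad A = sSup (norm '' spectrum ℂ (A.map Complex.ofReal)) := by
  simp only [specRad, Matrix.mem_spectrum_iff_exists_mulVec_eq_smul, Set.image,
    eq_comm (a := ‖_‖)]

theorem spectralRadius_map_ofReal_le_specRad {n : ℕ} (A : Matrix (Fin n) (Fin n) ℝ) :
    spectralRadius ℂ (A.map Complex.ofReal) ≤ ENNReal.ofReal (specRad A) := by
  refine iSup₂_le fun μ hμ => ?_
  rw [specRad_eq_sSup_norm_spectrum, ← enorm_eq_nnnorm, ← ofReal_norm]
  exact ENNReal.ofReal_le_ofReal <|
    le_csSup ((Matrix.finite_spectrum _).image _).bddAbove (Set.mem_image_of_mem _ hμ)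

attribute [local instance] Matrix.linftyOpNormedAddCommGroup Matrix.linftyOpNormedRing
  Matrix.linftyOpNormedAlgebra

theorem tendsto_pow_atTop_nhds_zero_of_specRad_lt_one {n : ℕ} {A : Matrix (Fin n) (Fin n) ℝ}
    (hA : specRad A < 1) : Tendsto (A ^ ·) atTop (𝓝 0) := by
  have hB := spectrum.tendsto_pow_atTop_nhds_zero_of_spectralRadius_lt_one <|
    (spectralRadius_map_ofReal_le_specRad A).trans_lt (ENNReal.ofReal_lt_one.mpr hA)
  have hre := ((continuous_id.matrix_map Complex.continuous_re).tendsto 0).comp hB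
  have hpow (m : ℕ) : A.map Complex.ofReal ^ m = (A ^ m).map Complex.ofReal :=
    (Matrix.map_pow A Complex.ofRealHom m).symm
  simpa [Function.comp_def, hpow, Matrix.map_map] using hre

section Entrywise

variable {ι : Type*} [Fintype ι]

theorem Matrix.mulVec_le_mulVec_of_nonneg {M : Matrix ι ι ℝ} (hM : ∀ i j, 0 ≤ M i j)
    {u v : ι → ℝ} (huv : ∀ j, u j ≤ v j) (i : ι) : (M *ᵥ u) i ≤ (M *ᵥ v) i :=
  Finset.sum_le_sum fun j _ => mul_le_mul_of_nonneg_left (huv j) (hM i j)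

theorem abs_sub_iterate_le_pow_mulVec [DecidableEq ι] {S : Set (ι → ℝ)} {F : (ι → ℝ) → ι → ℝ}
    (hFS : MapsTo F S S) {A : Matrix ι ι ℝ} (hA : ∀ i j, 0 ≤ A i j)
    (hLip : ∀ x ∈ S, ∀ y ∈ S, ∀ i, |F x i - F y i| ≤ (A *ᵥ fun j => |x j - y j|) i) (k : ℕ) :
    ∀ x ∈ S, ∀ y ∈ S, ∀ i, |F^[k] x i - F^[k] y i| ≤ (A ^ k *ᵥ fun j => |x j - y j|) i := by
  induction k with
  | zero => simp
  | succ k ih =>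
    intro x hx y hy i
    calc |F^[k + 1] x i - F^[k + 1] y i|
        ≤ (A ^ k *ᵥ fun j => |F x j - F y j|) i := by
          simpa only [iterate_succ_apply] using ih (F x) (hFS hx) (F y) (hFS hy) i
      _ ≤ (A ^ k *ᵥ A *ᵥ fun j => |x j - y j|) i :=
          Matrix.mulVec_le_mulVec_of_nonneg (Matrix.pow_apply_nonneg hA k) (hLip x hx y hy) i
      _ = (A ^ (k + 1) *ᵥ fun j => |x j - y j|) i := by rw [Matrix.mulVec_mulVec, pow_succ]

theorem dist_le_norm_mul_dist_of_abs_sub_le_mulVec {M : Matrix ι ι ℝ} {u w x y : ι → ℝ}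
    (h : ∀ i, |u i - w i| ≤ (M *ᵥ fun j => |x j - y j|) i) : dist u w ≤ ‖M‖ * dist x y := by
  have habs : ‖fun j => |x j - y j|‖ = dist x y := by
    simp only [dist_eq_norm, Pi.norm_def, Real.nnnorm_abs, Pi.sub_apply]
  refine (dist_pi_le_iff (by positivity)).mpr fun i => ?_
  calc dist (u i) (w i) = |u i - w i| := Real.dist_eq _ _
    _ ≤ (M *ᵥ fun j => |x j - y j|) i := h i
    _ ≤ ‖M *ᵥ fun j => |x j - y j|‖ := (Real.le_norm_self _).trans (norm_le_pi_norm _ i)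
    _ ≤ ‖M‖ * dist x y := habs ▸ Matrix.linfty_opNorm_mulVec _ _

theorem dist_le_sqrt_sum_sq_sub (x y : ι → ℝ) : dist x y ≤ √(∑ i, (x i - y i) ^ 2) :=
  (dist_pi_le_iff (Real.sqrt_nonneg _)).mpr fun i => Real.abs_le_sqrt <|
    Finset.single_le_sum (f := fun j => (x j - y j) ^ 2) (fun _ _ => sq_nonneg _)
      (Finset.mem_univ i)

theorem sqrt_sum_sq_sub_le_sqrt_card_mul_dist (x y : ι → ℝ) :
    √(∑ i, (x i - y i) ^ 2) ≤ √(Fintype.card ι) * dist x y := by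
  rw [← Real.sqrt_sq dist_nonneg, ← Real.sqrt_mul (Nat.cast_nonneg _)]
  refine Real.sqrt_le_sqrt ?_
  calc ∑ i, (x i - y i) ^ 2 ≤ ∑ _i : ι, dist x y ^ 2 := Finset.sum_le_sum fun i _ => by
        rw [← sq_abs, ← Real.dist_eq]
        exact pow_le_pow_left₀ dist_nonneg (dist_le_pi_dist x y i) 2
    _ = Fintype.card ι * dist x y ^ 2 := by simp

end Entrywise

theorem Filter.tendsto_atTop_of_arithmetic {α : Type*} {l : Filter α} {u : ℕ → α} {n : ℕ}
    (hn : n ≠ 0) (h : ∀ k < n, Tendsto (fun a => u (n * a + k)) atTop l) :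
    Tendsto u atTop l :=
  fun _ hs => Eventually.atTop_of_arithmetic hn fun k hk => h k hk hs

namespace ContractingWith

variable {α : Type*} [MetricSpace α] [Nonempty α] [CompleteSpace α] {K : ℝ≥0} {f : α → α}
  {k : ℕ}

theorem tendsto_iterate_fixedPoint_of_iterate (hf : ContractingWith K f^[k]) (hk : k ≠ 0)
    (x : α) : Tendsto (fun m => f^[m] x) atTop (𝓝 (hf.fixedPoint f^[k])) := by
  refine tendsto_atTop_of_arithmetic hk fun r _ => ?_
  simpa only [iterate_add_apply, iterate_mul] using hf.tendsto_iterate_fixedPoint (f^[r] x)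

theorem eq_fixedPoint_iterate (hf : ContractingWith K f^[k]) {q : α} (hq : IsFixedPt f q) :
    q = hf.fixedPoint f^[k] :=
  hf.fixedPoint_unique (hq.iterate k)

end ContractingWith

theorem Set.MapsTo.exists_fixedPoint_of_lipschitzOnWith_iterate {α : Type*} [MetricSpace α]
    {S : Set α} (hSc : IsComplete S) (hS : S.Nonempty) {F : α → α} (hFS : MapsTo F S S)
    {K : ℝ≥0} (hK : K < 1) {k : ℕ} (hk : k ≠ 0) (hF : LipschitzOnWith K F^[k] S) :
    ∃ p ∈ S, F p = p ∧ (∀ q ∈ S, F q = q → q = p) ∧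
      ∀ x ∈ S, Tendsto (fun m => F^[m] x) atTop (𝓝 p) := by
  have : Nonempty S := hS.to_subtype
  have : CompleteSpace S := hSc.completeSpace_coe
  have hf : ContractingWith K (hFS.restrict F S S)^[k] :=
    ⟨hK, by simpa only [MapsTo.iterate_restrict] using hF.mapsToRestrict (hFS.iterate k)⟩
  set p := hf.fixedPoint _
  refine ⟨p, p.2, congrArg Subtype.val hf.isFixedPt_fixedPoint_iterate, fun q hq hFq => ?_,
    fun x hx => ?_⟩
  · exact congrArg Subtype.val (hf.eq_fixedPoint_iterate (q := ⟨q, hq⟩) (Subtype.ext hFq))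
  · have := (continuous_subtype_val.tendsto p).comp
      (hf.tendsto_iterate_fixedPoint_of_iterate hk ⟨x, hx⟩)
    simpa only [comp_def, MapsTo.iterate_restrict, MapsTo.val_restrict_apply] using this

/-- If F : S → S satisfies |Fx − Fy| ≤ A|x − y| entrywise for a nonnegative
matrix A with r(A) < 1, then F is eventually contracting on S with respect to
the Euclidean norm; consequently, if S is closed (and nonempty), F has a
unique fixed point in S and iterates from any starting point in S converge
to it. -/
theorem eventually_contracting_of_matrix_bound
    {n : ℕ} (S : Set (Fin n → ℝ)) (hS : S.Nonempty)
    (F : (Fin n → ℝ) → (Fin n → ℝ)) (hFS : ∀ x ∈ S, F x ∈ S)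
    (A : Matrix (Fin n) (Fin n) ℝ) (hA : ∀ i j, 0 ≤ A i j)
    (hr : specRad A < 1)
    (hLip : ∀ x ∈ S, ∀ y ∈ S, ∀ i,
      |F x i - F y i| ≤ A.mulVec (fun j => |x j - y j|) i) :
    (∃ k : ℕ, ∃ lam : ℝ, lam < 1 ∧ ∀ x ∈ S, ∀ y ∈ S,
      Real.sqrt (∑ i, (F^[k] x i - F^[k] y i) ^ 2) ≤
        lam * Real.sqrt (∑ i, (x i - y i) ^ 2)) ∧
    (IsClosed S → ∃ p ∈ S, F p = p ∧ (∀ q ∈ S, F q = q → q = p) ∧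
      ∀ x ∈ S, Tendsto (fun m : ℕ => F^[m] x) atTop (𝓝 p)) := by
  have hnorm : Tendsto (fun k => ‖A ^ k‖) atTop (𝓝 0) :=
    tendsto_zero_iff_norm_tendsto_zero.mp (tendsto_pow_atTop_nhds_zero_of_specRad_lt_one hr)
  have hnorm_sqrt : Tendsto (fun k => √n * ‖A ^ k‖) atTop (𝓝 0) := by
    simpa using hnorm.const_mul √n
  obtain ⟨k, hk0, hk1, hkn⟩ : ∃ k, k ≠ 0 ∧ ‖A ^ k‖ < 1 ∧ √n * ‖A ^ k‖ < 1 :=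
    ((eventually_ne_atTop 0).and ((hnorm.eventually_lt_const one_pos).and
      (hnorm_sqrt.eventually_lt_const one_pos))).exists
  have hdist : ∀ x ∈ S, ∀ y ∈ S, dist (F^[k] x) (F^[k] y) ≤ ‖A ^ k‖ * dist x y :=
    fun x hx y hy => dist_le_norm_mul_dist_of_abs_sub_le_mulVec
      (abs_sub_iterate_le_pow_mulVec hFS hA hLip k x hx y hy)
  refine ⟨⟨k, √n * ‖A ^ k‖, hkn, fun x hx y hy => ?_⟩, fun hSc => ?_⟩
  · calc √(∑ i, (F^[k] x i - F^[k] y i) ^ 2) ≤ √n * dist (F^[k] x) (F^[k] y) := by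
          simpa using sqrt_sum_sq_sub_le_sqrt_card_mul_dist (F^[k] x) (F^[k] y)
      _ ≤ √n * (‖A ^ k‖ * √(∑ i, (x i - y i) ^ 2)) := by
          gcongr
          exact (hdist x hx y hy).trans (by gcongr; exact dist_le_sqrt_sum_sq_sub x y)
      _ = √n * ‖A ^ k‖ * √(∑ i, (x i - y i) ^ 2) := (mul_assoc ..).symm
  · exact MapsTo.exists_fixedPoint_of_lipschitzOnWith_iterate hSc.isComplete hS hFS
      (mod_cast hk1) hk0 (LipschitzOnWith.of_dist_le_mul hdist)
end

section
/- Markov–Dobrushin contraction: for any stochastic matrix P on a finite set S and any distributions φ, ψ on S, the ℓ1 deviation satisfies ‖φP − ψP‖₁ ≤ (1 − α(P))·‖φ − ψ‖₁, where α(P) = min over pairs (x,x') of Σ_y min{P(x,y), P(x',y)}; iterating, ‖φP^t − ψP^t‖₁ ≤ (1 − α(P))^t ‖φ − ψ‖₁ for all t ∈ ℕ. In particular, if α(P^k) > 0 for some k, then P has a unique stationary distribution ψ* and φP^t → ψ* for every distribution φ. -/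
/-!
Write δ = φ − ψ, a vector of total mass zero, as δ⁺ − δ⁻ with both parts of mass a = ‖δ‖₁ / 2.
Then a · δP = Σ_{x,x'} δ⁺(x) δ⁻(x') (P(x,·) − P(x',·)), and
‖P(x,·) − P(x',·)‖₁ = 2 − 2 Σ_y min{P(x,y), P(x',y)} ≤ 2 (1 − α(P)), whence the contraction.

If α(P^m) > 0 with m ≥ 1, any two orbits φP^t, ψP^t of distributions merge at the uniform rate
2 (1 − α(P^m))^⌊t/m⌋. So every orbit is Cauchy, all orbits share one limit, and that limit is
the unique stationary distribution. The case m = 0 is degenerate: α(P⁰) > 0 forces |S| = 1.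
-/

open Filter Topology

/-- A probability distribution on a finite set, viewed as a nonnegative
vector summing to one. -/
def IsDistribution {S : Type*} [Fintype S] (φ : S → ℝ) : Prop :=
  (∀ x, 0 ≤ φ x) ∧ ∑ x, φ x = 1

/-- A stochastic matrix: nonnegative entries with unit row sums. -/
def IsStochastic {S : Type*} [Fintype S] (P : Matrix S S ℝ) : Prop :=
  (∀ x y, 0 ≤ P x y) ∧ ∀ x, ∑ y, P x y = 1

/-- The Markov–Dobrushin coefficient of P:
α(P) = min_{(x,x')} Σ_y min{P(x,y), P(x',y)}. -/
noncomputable def dobrushin {S : Type*} [Fintype S] (P : Matrix S S ℝ) : ℝ :=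
  ⨅ p : S × S, ∑ y, min (P p.1 y) (P p.2 y)

/-- The ℓ1 deviation between two vectors on a finite set. -/
def l1Dev {S : Type*} [Fintype S] (φ ψ : S → ℝ) : ℝ :=
  ∑ x, |φ x - ψ x|

open Matrix Finset

section

variable {S : Type*} [Fintype S] {P : Matrix S S ℝ}

lemma sum_vecMul (hP : ∀ x, ∑ y, P x y = 1) (φ : S → ℝ) : ∑ y, (φ ᵥ* P) y = ∑ x, φ x := by
  simp only [vecMul, dotProduct]
  rw [sum_comm]
  simp only [← mul_sum, hP, mul_one]

lemma dobrushin_le (P : Matrix S S ℝ) (x x' : S) :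
    dobrushin P ≤ ∑ y, min (P x y) (P x' y) :=
  ciInf_le (Finite.bddBelow_range _) (x, x')

lemma dobrushin_le_one (hP : ∀ x, ∑ y, P x y = 1) : dobrushin P ≤ 1 := by
  rcases isEmpty_or_nonempty S with _ | ⟨⟨x⟩⟩
  · simp [dobrushin, Real.iInf_of_isEmpty]
  · simpa [hP x] using dobrushin_le P x x

lemma nonempty_of_dobrushin_pos (h : 0 < dobrushin P) : Nonempty S := by
  by_contra hS
  rw [not_nonempty_iff] at hS
  simp [dobrushin, Real.iInf_of_isEmpty] at h

lemma dobrushin_eq_one_of_subsingleton [Subsingleton S] [Nonempty S]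
    (hP : ∀ x, ∑ y, P x y = 1) : dobrushin P = 1 :=
  (dobrushin_le_one hP).antisymm <| le_ciInf fun p => by
    rw [Subsingleton.elim p.2 p.1]
    simp [hP]

lemma sum_abs_sub_le_two_mul_one_sub_dobrushin (hP : ∀ x, ∑ y, P x y = 1) (x x' : S) :
    ∑ y, |P x y - P x' y| ≤ 2 * (1 - dobrushin P) := by
  have habs (a b : ℝ) : |a - b| = a + b - 2 * min a b := by
    rw [← max_sub_min_eq_abs', ← min_add_max a b]; ring
  have := dobrushin_le P x x'
  simp only [habs, sum_sub_distrib, sum_add_distrib, ← mul_sum, hP]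
  linarith

lemma sum_mul_vecMul_sub (P : Matrix S S ℝ) {u v : S → ℝ} (huv : ∑ x, u x = ∑ x, v x)
    (y : S) : (∑ x, u x) * ((u - v) ᵥ* P) y = ∑ x, ∑ x', u x * v x' * (P x y - P x' y) := by
  have hsplit : ∑ x, ∑ x', u x * v x' * (P x y - P x' y) =
      (∑ x, u x * P x y) * ∑ x', v x' - (∑ x, u x) * ∑ x', v x' * P x' y := by
    simp only [sum_mul_sum, ← sum_sub_distrib]
    exact sum_congr rfl fun x _ => sum_congr rfl fun x' _ => by ring
  rw [hsplit, ← huv]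
  simp only [vecMul, dotProduct, Pi.sub_apply, sub_mul, sum_sub_distrib]
  ring

lemma sum_mul_sum_abs_vecMul_sub_le (P : Matrix S S ℝ) {u v : S → ℝ} (hu : 0 ≤ u) (hv : 0 ≤ v)
    (huv : ∑ x, u x = ∑ x, v x) :
    (∑ x, u x) * ∑ y, |((u - v) ᵥ* P) y| ≤
      ∑ x, ∑ x', u x * v x' * ∑ y, |P x y - P x' y| := by
  have hsum : 0 ≤ ∑ x, u x := sum_nonneg fun x _ => hu x
  calc (∑ x, u x) * ∑ y, |((u - v) ᵥ* P) y|
      = ∑ y, |∑ x, ∑ x', u x * v x' * (P x y - P x' y)| := by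
        simp only [mul_sum, ← sum_mul_vecMul_sub P huv, abs_mul, abs_of_nonneg hsum]
    _ ≤ ∑ y, ∑ x, ∑ x', u x * v x' * |P x y - P x' y| := by
        gcongr with y
        refine (abs_sum_le_sum_abs _ _).trans (sum_le_sum fun x _ => ?_)
        refine (abs_sum_le_sum_abs _ _).trans_eq (sum_congr rfl fun x' _ => ?_)
        rw [abs_mul, abs_of_nonneg (mul_nonneg (hu x) (hv x'))]
    _ = ∑ x, ∑ x', u x * v x' * ∑ y, |P x y - P x' y| := by
        simp only [mul_sum]
        rw [sum_comm]
        exact sum_congr rfl fun x _ => sum_comm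

lemma sum_abs_vecMul_le_of_sum_eq_zero (hP : ∀ x, ∑ y, P x y = 1) {δ : S → ℝ}
    (hδ : ∑ x, δ x = 0) : ∑ y, |(δ ᵥ* P) y| ≤ (1 - dobrushin P) * ∑ x, |δ x| := by
  set u : S → ℝ := fun x => (δ x)⁺
  set v : S → ℝ := fun x => (δ x)⁻
  have hδuv : δ = u - v := funext fun x => (posPart_sub_negPart (δ x)).symm
  have habs : ∑ x, |δ x| = ∑ x, u x + ∑ x, v x := by
    simp only [u, v, ← sum_add_distrib, posPart_add_negPart]
  have huv : ∑ x, u x = ∑ x, v x := by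
    rw [hδuv] at hδ
    simpa [sum_sub_distrib, sub_eq_zero] using hδ
  rcases (sum_nonneg fun x _ => posPart_nonneg (δ x) : 0 ≤ ∑ x, u x).eq_or_lt with h0 | hpos
  · have hδ0 : δ = 0 := by
      have : ∑ x, |δ x| = 0 := by rw [habs, ← huv, ← h0, add_zero]
      funext x
      exact abs_eq_zero.1 ((sum_eq_zero_iff_of_nonneg fun y _ => abs_nonneg (δ y)).1 this x
        (mem_univ x))
    simp [hδ0]
  refine le_of_mul_le_mul_left ?_ hpos
  calc (∑ x, u x) * ∑ y, |(δ ᵥ* P) y|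
      ≤ ∑ x, ∑ x', u x * v x' * ∑ y, |P x y - P x' y| := by
        rw [hδuv]
        exact sum_mul_sum_abs_vecMul_sub_le P (fun _ => posPart_nonneg _)
          (fun _ => negPart_nonneg _) huv
    _ ≤ ∑ x, ∑ x', u x * v x' * (2 * (1 - dobrushin P)) := by
        gcongr with x _ x' _
        exact sum_abs_sub_le_two_mul_one_sub_dobrushin hP x x'
    _ = (∑ x, u x) * ((1 - dobrushin P) * ∑ x, |δ x|) := by
        simp only [← sum_mul, ← sum_mul_sum, habs, ← huv]
        ring

lemma l1Dev_vecMul_le (hP : ∀ x, ∑ y, P x y = 1) {φ ψ : S → ℝ}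
    (h : ∑ x, φ x = ∑ x, ψ x) :
    l1Dev (φ ᵥ* P) (ψ ᵥ* P) ≤ (1 - dobrushin P) * l1Dev φ ψ := by
  simpa [l1Dev, sub_vecMul] using
    sum_abs_vecMul_le_of_sum_eq_zero hP (δ := φ - ψ) (by simp [sum_sub_distrib, h])

lemma IsDistribution.l1Dev_le_two {φ ψ : S → ℝ} (hφ : IsDistribution φ) (hψ : IsDistribution ψ) :
    l1Dev φ ψ ≤ 2 :=
  calc l1Dev φ ψ ≤ ∑ x, (|φ x| + |ψ x|) := sum_le_sum fun x _ => abs_sub _ _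
    _ = 2 := by
      simp only [abs_of_nonneg (hφ.1 _), abs_of_nonneg (hψ.1 _), sum_add_distrib, hφ.2, hψ.2]
      norm_num

lemma isClosed_setOf_isDistribution : IsClosed {φ : S → ℝ | IsDistribution φ} := by
  simp only [IsDistribution, Set.ofPred_and, Set.ofPred_forall]
  exact (isClosed_iInter fun x => isClosed_le continuous_const (continuous_apply x)).inter
    (isClosed_eq (continuous_finsetSum _ fun x _ => continuous_apply x) continuous_const)

lemma dist_le_l1Dev (φ ψ : S → ℝ) : dist φ ψ ≤ l1Dev φ ψ :=
  (dist_pi_le_iff (sum_nonneg fun _ _ => abs_nonneg _)).2 fun x =>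
    single_le_sum (f := fun y => |φ y - ψ y|) (fun _ _ => abs_nonneg _) (mem_univ x)

variable [DecidableEq S]

lemma l1Dev_vecMul_pow_le (hP : ∀ x, ∑ y, P x y = 1) {φ ψ : S → ℝ}
    (h : ∑ x, φ x = ∑ x, ψ x) (t : ℕ) :
    l1Dev (φ ᵥ* P ^ t) (ψ ᵥ* P ^ t) ≤ (1 - dobrushin P) ^ t * l1Dev φ ψ := by
  induction t generalizing φ ψ with
  | zero => simp
  | succ t ih =>
    rw [pow_succ', ← vecMul_vecMul, ← vecMul_vecMul, pow_succ, mul_assoc]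
    exact (ih (by rw [sum_vecMul hP, sum_vecMul hP, h])).trans <|
      mul_le_mul_of_nonneg_left (l1Dev_vecMul_le hP h)
        (pow_nonneg (sub_nonneg.2 (dobrushin_le_one hP)) t)

lemma subsingleton_of_dobrushin_one_pos (h : 0 < dobrushin (1 : Matrix S S ℝ)) :
    Subsingleton S := by
  refine ⟨fun x x' => by_contra fun hxx' => h.not_ge ((dobrushin_le 1 x x').trans_eq ?_)⟩
  refine sum_eq_zero fun y _ => ?_
  by_cases hx : x = y <;> by_cases hx' : x' = y <;> simp_all [one_apply]

lemma exists_pos_dobrushin_pow_pos (hP : ∀ x, ∑ y, P x y = 1) {k : ℕ}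
    (hk : 0 < dobrushin (P ^ k)) : ∃ m, 0 < m ∧ 0 < dobrushin (P ^ m) := by
  rcases k.eq_zero_or_pos with rfl | hk0
  · have := nonempty_of_dobrushin_pos hk
    rw [pow_zero] at hk
    have := subsingleton_of_dobrushin_one_pos hk
    exact ⟨1, one_pos, by rw [pow_one, dobrushin_eq_one_of_subsingleton hP]; exact one_pos⟩
  · exact ⟨k, hk0, hk⟩

lemma IsDistribution.vecMul {Q : Matrix S S ℝ} (hQ : Q ∈ rowStochastic ℝ S) {φ : S → ℝ}
    (hφ : IsDistribution φ) : IsDistribution (φ ᵥ* Q) :=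
  ⟨nonneg_vecMul_of_mem_rowStochastic hQ hφ.1,
    by rw [sum_vecMul (sum_row_of_mem_rowStochastic hQ), hφ.2]⟩

lemma isDistribution_row (hP : P ∈ rowStochastic ℝ S) (x : S) : IsDistribution (P x) :=
  ⟨fun _ => nonneg_of_mem_rowStochastic hP, sum_row_of_mem_rowStochastic hP x⟩

lemma l1Dev_vecMul_pow_le_two_mul (hP : P ∈ rowStochastic ℝ S) (k t : ℕ) {φ ψ : S → ℝ}
    (hφ : IsDistribution φ) (hψ : IsDistribution ψ) :
    l1Dev (φ ᵥ* P ^ t) (ψ ᵥ* P ^ t) ≤ 2 * (1 - dobrushin (P ^ k)) ^ (t / k) := by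
  have hPt (n : ℕ) : P ^ n ∈ rowStochastic ℝ S := pow_mem hP n
  have hφ' := hφ.vecMul (hPt (t % k))
  have hψ' := hψ.vecMul (hPt (t % k))
  have hβ := sub_nonneg.2 (dobrushin_le_one (sum_row_of_mem_rowStochastic (hPt k)))
  rw [← Nat.mod_add_div t k, pow_add, pow_mul, ← vecMul_vecMul, ← vecMul_vecMul,
    Nat.mod_add_div t k]
  calc _ ≤ (1 - dobrushin (P ^ k)) ^ (t / k) * l1Dev (φ ᵥ* P ^ (t % k)) (ψ ᵥ* P ^ (t % k)) :=
        l1Dev_vecMul_pow_le (sum_row_of_mem_rowStochastic (hPt k)) (hφ'.2.trans hψ'.2.symm) _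
    _ ≤ (1 - dobrushin (P ^ k)) ^ (t / k) * 2 :=
        mul_le_mul_of_nonneg_left (hφ'.l1Dev_le_two hψ') (pow_nonneg hβ _)
    _ = 2 * (1 - dobrushin (P ^ k)) ^ (t / k) := mul_comm _ _

lemma vecMul_pow_of_vecMul_eq {ψ : S → ℝ} (h : ψ ᵥ* P = ψ) (t : ℕ) : ψ ᵥ* P ^ t = ψ := by
  induction t with
  | zero => simp
  | succ t ih => rw [pow_succ, ← vecMul_vecMul, ih, h]

lemma exists_tendsto_vecMul_pow_of_merging [Nonempty S] (hP : P ∈ rowStochastic ℝ S)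
    {ε : ℕ → ℝ} (hε : Tendsto ε atTop (𝓝 0))
    (hmerge : ∀ t φ ψ, IsDistribution φ → IsDistribution ψ →
      l1Dev (φ ᵥ* P ^ t) (ψ ᵥ* P ^ t) ≤ ε t) :
    ∃ ψs, IsDistribution ψs ∧
      ∀ φ, IsDistribution φ → Tendsto (fun t => φ ᵥ* P ^ t) atTop (𝓝 ψs) := by
  obtain ⟨x₀⟩ := ‹Nonempty S›
  have hφ₀ := isDistribution_row hP x₀
  have hcauchy : CauchySeq fun t => P x₀ ᵥ* P ^ t := by
    refine cauchySeq_of_le_tendsto_0' ε (fun n m hnm => (dist_le_l1Dev _ _).trans ?_) hε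
    rw [← Nat.sub_add_cancel hnm, pow_add, ← vecMul_vecMul]
    exact hmerge n _ _ hφ₀ (hφ₀.vecMul (pow_mem hP _))
  obtain ⟨ψs, hψs⟩ := cauchySeq_tendsto_of_complete hcauchy
  refine ⟨ψs, isClosed_setOf_isDistribution.mem_of_tendsto hψs
    (Eventually.of_forall fun t => hφ₀.vecMul (pow_mem hP t)), fun φ hφ => ?_⟩
  exact tendsto_of_tendsto_of_dist hψs (squeeze_zero (fun _ => dist_nonneg)
    (fun t => (dist_le_l1Dev _ _).trans (hmerge t _ _ hφ₀ hφ)) hε)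

lemma vecMul_eq_self_and_eq_of_tendsto_vecMul_pow {ψs : S → ℝ}
    (hP : P ∈ rowStochastic ℝ S) (hψs : IsDistribution ψs)
    (hlim : ∀ φ, IsDistribution φ → Tendsto (fun t => φ ᵥ* P ^ t) atTop (𝓝 ψs)) :
    ψs ᵥ* P = ψs ∧ ∀ ψ, IsDistribution ψ ∧ ψ ᵥ* P = ψ → ψ = ψs := by
  refine ⟨tendsto_nhds_unique ?_ (hlim _ (hψs.vecMul hP)), fun ψ ⟨hψ, hstat⟩ => ?_⟩
  · have hcomm (t : ℕ) : ψs ᵥ* P ^ t ᵥ* P = ψs ᵥ* P ᵥ* P ^ t := by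
      rw [vecMul_vecMul, vecMul_vecMul, ← pow_succ, pow_succ']
    simpa only [Function.comp_def, id, hcomm] using
      ((continuous_id.matrix_vecMul (continuous_const (y := P))).tendsto ψs).comp (hlim ψs hψs)
  · simpa [vecMul_pow_of_vecMul_eq hstat] using hlim ψ hψ

end

/-- Markov–Dobrushin contraction: for a stochastic matrix P and distributions
φ, ψ, ‖φP − ψP‖₁ ≤ (1 − α(P))‖φ − ψ‖₁ and, by iteration,
‖φP^t − ψP^t‖₁ ≤ (1 − α(P))^t ‖φ − ψ‖₁ for all t.  If α(P^k) > 0 for some k,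
then P has a unique stationary distribution ψ* and φP^t → ψ* for every
distribution φ. -/
theorem markov_dobrushin_contraction
    {S : Type*} [Fintype S] [DecidableEq S] (P : Matrix S S ℝ) (hP : IsStochastic P) :
    (∀ φ ψ : S → ℝ, IsDistribution φ → IsDistribution ψ →
      l1Dev (Matrix.vecMul φ P) (Matrix.vecMul ψ P) ≤
        (1 - dobrushin P) * l1Dev φ ψ ∧
      ∀ t : ℕ, l1Dev (Matrix.vecMul φ (P ^ t)) (Matrix.vecMul ψ (P ^ t)) ≤
        (1 - dobrushin P) ^ t * l1Dev φ ψ) ∧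
    ((∃ k : ℕ, 0 < dobrushin (P ^ k)) →
      ∃ ψs : S → ℝ, (IsDistribution ψs ∧ Matrix.vecMul ψs P = ψs) ∧
        (∀ ψ' : S → ℝ, IsDistribution ψ' ∧ Matrix.vecMul ψ' P = ψ' → ψ' = ψs) ∧
        ∀ φ : S → ℝ, IsDistribution φ →
          Tendsto (fun t : ℕ => Matrix.vecMul φ (P ^ t)) atTop (𝓝 ψs)) := by
  refine ⟨fun φ ψ hφ hψ => ⟨l1Dev_vecMul_le hP.2 (hφ.2.trans hψ.2.symm),
    l1Dev_vecMul_pow_le hP.2 (hφ.2.trans hψ.2.symm)⟩, ?_⟩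
  rintro ⟨k, hk⟩
  obtain ⟨m, hm, hαm⟩ := exists_pos_dobrushin_pow_pos hP.2 hk
  have : Nonempty S := nonempty_of_dobrushin_pos hαm
  have hPs : P ∈ rowStochastic ℝ S := mem_rowStochastic_iff_sum.2 hP
  have hrate : Tendsto (fun t => 2 * (1 - dobrushin (P ^ m)) ^ (t / m)) atTop (𝓝 0) := by
    have hβ := sub_nonneg.2 (dobrushin_le_one (sum_row_of_mem_rowStochastic (pow_mem hPs m)))
    simpa using ((tendsto_pow_atTop_nhds_zero_of_lt_one hβ (sub_lt_self 1 hαm)).comp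
      (Nat.tendsto_div_const_atTop hm.ne')).const_mul 2
  obtain ⟨ψs, hψs, hlim⟩ := exists_tendsto_vecMul_pow_of_merging hPs hrate
    fun t φ ψ hφ hψ => l1Dev_vecMul_pow_le_two_mul hPs m t hφ hψ
  obtain ⟨hstat, huniq⟩ := vecMul_eq_self_and_eq_of_tendsto_vecMul_pow hPs hψs hlim
  exact ⟨ψs, ⟨hψs, hstat⟩, huniq, hlim⟩
end
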